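/- Let V₃ be the digraph on vertices {1,2,3} with arcs (2,1) and (2,3) (the orientation of the path on three vertices whose middle vertex is a source). There exists a finite acyclic digraph O such that: (a) for every 2-coloring c : V(O) → Fin 2 there is an induced copy of V₃ in O all of whose vertices receive the same color (O has no V₃-free 2-coloring), and (b) there exists a 3-coloring c : V(O) → Fin 3 with no monochromatic induced copy of V₃ in which exactly one vertex of O receives color 0. -/

import Mathlib

/-- A simple digraph on vertex type `V`: no loops and no anti-parallel arcs. -/
structure Digraph' (V : Type*) : Type _ where
  Adj : V → V → Prop
  loopless : ∀ v, ¬ Adj v v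
  asymm : ∀ u v, Adj u v → ¬ Adj v u

/-- An induced copy of the digraph `F` in the digraph `D`, given by the embedding `φ`. -/
def IsInducedCopy {α β : Type*} (F : Digraph' α) (D : Digraph' β) (φ : α → β) : Prop :=
  Function.Injective φ ∧ ∀ u v : α, D.Adj (φ u) (φ v) ↔ F.Adj u v

/-- The image of `φ` is monochromatic under the coloring `c`. -/
def Monochromatic {α β : Type*} {k : ℕ} (c : β → Fin k) (φ : α → β) : Prop :=
  ∃ i : Fin k, ∀ u : α, c (φ u) = i

/-- The coloring `c` of `D` is `F`-free: no induced copy of `F` in `D` is monochromatic. -/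
def IsFFreeColoring {α β : Type*} (F : Digraph' α) (D : Digraph' β) {k : ℕ}
    (c : β → Fin k) : Prop :=
  ∀ φ : α → β, IsInducedCopy F D φ → ¬ Monochromatic c φ

/-- A digraph is acyclic if it contains no directed cycle. -/
def Digraph'.Acyclic {β : Type*} (D : Digraph' β) : Prop :=
  ∀ v : β, ¬ Relation.TransGen D.Adj v v

/-- The underlying simple graph of a digraph. -/
def Digraph'.underlying {V : Type*} (D : Digraph' V) : SimpleGraph V where
  Adj u v := D.Adj u v ∨ D.Adj v u
  symm := ⟨fun _ _ h => Or.symm h⟩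
  loopless := ⟨fun v (h : D.Adj v v ∨ D.Adj v v) => h.elim (D.loopless v) (D.loopless v)⟩

/-- The orientation of the path on three vertices `0, 1, 2` whose middle vertex `1`
is a source: arcs `(1, 0)` and `(1, 2)`. -/
def V3source : Digraph' (Fin 3) where
  Adj u v := (u = 1 ∧ v = 0) ∨ (u = 1 ∧ v = 2)
  loopless := by decide
  asymm := by decide

/-!
Induced copies of `V₃` are exactly the out-cherries `b ← a → d` with `b, d` non-adjacent, so
everything reduces to cherries in an explicit digraph on `0, …, 7` whose arcs all increase the label.

(a) Say vertex `2` has colour `A`. Its out-neighbours `3, …, 7` span only the arcs `3 → 5`,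
`3 → 6`, `4 → 5`, `4 → 7`, so those of colour `A` are pairwise adjacent and the others have
colour `B`. If `6` and `7` both have colour `B`, the cherries `0 → 6, 7` and `1 → 6, 7` force `0`
and `1` to have colour `A`, and `0 → 1, 2` is monochromatic. Otherwise the vertices of colour `A`
among `3, …, 7` are `{6}`, `{7}`, `{3, 6}` or `{4, 7}`, and `4 → 5, 7` or `3 → 5, 6` is
monochromatic in colour `B`.

(b) Vertex `0` alone gets colour `0`; the classes `{1, 2, 5}` and `{3, 4, 6, 7}` span only the arcs
`2 → 5`, resp. `3 → 6` and `4 → 7`, so they contain no cherry at all.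
-/

namespace Digraph'

variable {β : Type*} (D : Digraph' β)

def IsOutCherry (a b d : β) : Prop :=
  D.Adj a b ∧ D.Adj a d ∧ b ≠ d ∧ ¬ D.Adj b d ∧ ¬ D.Adj d b

instance [DecidableRel D.Adj] [DecidableEq β] (a b d : β) : Decidable (D.IsOutCherry a b d) := by
  unfold IsOutCherry; infer_instance

theorem acyclic_of_adj_imp_lt {γ : Type*} [Preorder γ] (f : β → γ)
    (h : ∀ u v, D.Adj u v → f u < f v) : D.Acyclic := fun v hv =>
  lt_irrefl (f v) <| by simpa only [Relation.transGen_eq_self] using hv.lift f h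

end Digraph'

section V3source

variable {β : Type*} {D : Digraph' β}

theorem isInducedCopy_V3source_iff {φ : Fin 3 → β} :
    IsInducedCopy V3source D φ ↔ D.IsOutCherry (φ 1) (φ 0) (φ 2) := by
  constructor
  · rintro ⟨hinj, hadj⟩
    exact ⟨(hadj 1 0).2 (.inl ⟨rfl, rfl⟩), (hadj 1 2).2 (.inr ⟨rfl, rfl⟩), hinj.ne (by decide),
      fun h => by simpa [V3source] using (hadj 0 2).1 h,
      fun h => by simpa [V3source] using (hadj 2 0).1 h⟩
  · rintro ⟨h10, h12, h02, hn02, hn20⟩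
    have hn01 := D.asymm _ _ h10
    have hn21 := D.asymm _ _ h12
    have h01 : φ 0 ≠ φ 1 := fun h => hn01 (h ▸ h10)
    have h21 : φ 2 ≠ φ 1 := fun h => hn21 (h ▸ h12)
    refine ⟨fun u v huv => ?_, fun u v => ?_⟩
    · fin_cases u <;> fin_cases v <;> simp_all [eq_comm]
    · fin_cases u <;> fin_cases v <;> simp [V3source, D.loopless, *]

theorem exists_monochromatic_V3source_copy_iff {k : ℕ} (c : β → Fin k) :
    (∃ φ, IsInducedCopy V3source D φ ∧ Monochromatic c φ) ↔
      ∃ a b d, D.IsOutCherry a b d ∧ c b = c a ∧ c d = c a := by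
  constructor
  · rintro ⟨φ, hφ, i, hi⟩
    exact ⟨φ 1, φ 0, φ 2, isInducedCopy_V3source_iff.1 hφ, by rw [hi, hi], by rw [hi, hi]⟩
  · rintro ⟨a, b, d, habd, hb, hd⟩
    refine ⟨![b, a, d], isInducedCopy_V3source_iff.2 habd, c a, fun u => ?_⟩
    fin_cases u
    exacts [hb, rfl, hd]

end V3source

def witness : Digraph' (Fin 8) where
  Adj u v := (u, v) ∈ [(0, 1), (0, 2), (0, 6), (0, 7), (1, 6), (1, 7),
    (2, 3), (2, 4), (2, 5), (2, 6), (2, 7), (3, 5), (3, 6), (4, 5), (4, 7)]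
  loopless := by decide
  asymm := by decide

instance : DecidableRel witness.Adj := fun u v => by unfold witness; infer_instance

theorem witness_acyclic : witness.Acyclic :=
  witness.acyclic_of_adj_imp_lt id (by decide)

theorem witness_exists_monochromatic_outCherry (c : Fin 8 → Fin 2) :
    ∃ a b d, witness.IsOutCherry a b d ∧ c b = c a ∧ c d = c a := by
  revert c
  decide +kernel

def witnessColoring : Fin 8 → Fin 3 := ![0, 2, 2, 1, 1, 2, 1, 1]

theorem witnessColoring_not_exists_monochromatic_outCherry :
    ¬ ∃ a b d, witness.IsOutCherry a b d ∧
      witnessColoring b = witnessColoring a ∧ witnessColoring d = witnessColoring a := by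
  decide

/-- There is a finite acyclic digraph `O` such that (a) every `2`-coloring of `O` has a
monochromatic induced copy of `V₃` (no `V₃`-free `2`-coloring), and (b) there is a
`V₃`-free `3`-coloring of `O` in which exactly one vertex receives color `0`. -/
theorem statement1 :
    ∃ (m : ℕ) (O : Digraph' (Fin m)), O.Acyclic ∧
      (∀ c : Fin m → Fin 2, ∃ φ : Fin 3 → Fin m,
        IsInducedCopy V3source O φ ∧ Monochromatic c φ) ∧
      (∃ c : Fin m → Fin 3, IsFFreeColoring V3source O c ∧ ∃! x : Fin m, c x = 0) := by
  refine ⟨8, witness, witness_acyclic, fun c => ?_, witnessColoring, ?_, 0, rfl, by decide⟩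
  · exact (exists_monochromatic_V3source_copy_iff c).2 (witness_exists_monochromatic_outCherry c)
  · exact fun φ hφ hmono => witnessColoring_not_exists_monochromatic_outCherry <|
      (exists_monochromatic_V3source_copy_iff _).1 ⟨φ, hφ, hmono⟩
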